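/- Let N ≥ 1, let D be the N×N diagonal real matrix with diagonal entries d₁, …, d_N > 0, let G, H, Γ be N×N real matrices, and suppose there are nonnegative reals a, b, c with a + b + c < 1 such that for every C ∈ ℝᴺ: ⟨DC, G(DC)⟩ ≥ −a⟨C, DC⟩, |⟨DC, H(DC)⟩| ≤ b⟨C, DC⟩, and |⟨DC, Γ(DC)⟩| ≤ c⟨C, DC⟩. If C ∈ ℝᴺ satisfies (I + (G − H − Γ)D)C = −𝟙, where 𝟙 = (1, …, 1), then Σ_{k=1}^N C_k² ≤ (1 − (a + b + c))⁻² (Σ_{k=1}^N d_k)/(min_{1≤k≤N} d_k). -/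
import Mathlib


open Matrix

/-- Abstract form of Lemma 5 of the paper: under the quadratic-form bounds on `G`, `H`,
`Γ` with `a + b + c < 1`, any solution `C` of `(I + (G − H − Γ)D)C = −𝟙` satisfies
`Σ C_k² ≤ (1 − (a+b+c))⁻² (Σ d_k)/(min_k d_k)`. -/
theorem mesoscale_coefficient_bound (N : ℕ) (hN : 1 ≤ N)
    (d : Fin N → ℝ) (hd : ∀ k, 0 < d k)
    (G H Gam : Matrix (Fin N) (Fin N) ℝ)
    (a b c : ℝ) (ha : 0 ≤ a) (hb : 0 ≤ b) (hc : 0 ≤ c) (habc : a + b + c < 1)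
    (hG : ∀ C : Fin N → ℝ,
      -(a * (C ⬝ᵥ (Matrix.diagonal d *ᵥ C))) ≤
        (Matrix.diagonal d *ᵥ C) ⬝ᵥ (G *ᵥ (Matrix.diagonal d *ᵥ C)))
    (hH : ∀ C : Fin N → ℝ,
      |(Matrix.diagonal d *ᵥ C) ⬝ᵥ (H *ᵥ (Matrix.diagonal d *ᵥ C))| ≤
        b * (C ⬝ᵥ (Matrix.diagonal d *ᵥ C)))
    (hGam : ∀ C : Fin N → ℝ,
      |(Matrix.diagonal d *ᵥ C) ⬝ᵥ (Gam *ᵥ (Matrix.diagonal d *ᵥ C))| ≤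
        c * (C ⬝ᵥ (Matrix.diagonal d *ᵥ C)))
    (C : Fin N → ℝ)
    (hC : (1 + (G - H - Gam) * Matrix.diagonal d) *ᵥ C = -(fun _ => (1 : ℝ))) :
    ∑ k, (C k) ^ 2 ≤
      ((1 - (a + b + c))⁻¹) ^ 2 * (∑ k, d k) /
        (Finset.univ.inf' (Finset.univ_nonempty_iff.mpr
          (Fin.pos_iff_nonempty.mp hN)) d) := by

  classical
  set m := (Finset.univ.inf' (Finset.univ_nonempty_iff.mpr
          (Fin.pos_iff_nonempty.mp hN)) d) with hm
  have hm0 : 0 < m := by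
    rw [hm, Finset.lt_inf'_iff]
    exact fun k _ => hd k
  set v : Fin N → ℝ := Matrix.diagonal d *ᵥ C with hv
  set Q : ℝ := C ⬝ᵥ v with hQdef
  have hvk : ∀ k, v k = d k * C k := fun k => by
    simp [hv, Matrix.mulVec_diagonal]
  have hQeq : Q = ∑ k, d k * (C k) ^ 2 := by
    simp only [hQdef, dotProduct]
    refine Finset.sum_congr rfl fun k _ => ?_
    rw [hvk k]; ring
  have hQ0 : 0 ≤ Q := by
    rw [hQeq]
    exact Finset.sum_nonneg fun k _ => mul_nonneg (hd k).le (sq_nonneg _)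
  set T : ℝ := ∑ k, d k * C k with hT
  set S : ℝ := ∑ k, d k with hS
  -- main identity
  have key : Q + (v ⬝ᵥ (G *ᵥ v) - v ⬝ᵥ (H *ᵥ v) - v ⬝ᵥ (Gam *ᵥ v)) = -T := by
    have h1 := congrArg (fun w => v ⬝ᵥ w) hC
    have hmm : ((G - H - Gam) * Matrix.diagonal d) *ᵥ C = (G - H - Gam) *ᵥ v := by
      rw [← Matrix.mulVec_mulVec, ← hv]
    simp only [Matrix.add_mulVec, Matrix.one_mulVec, hmm,
      Matrix.sub_mulVec, dotProduct_add, dotProduct_sub, dotProduct_neg] at h1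
    have hvC : v ⬝ᵥ C = Q := by
      simp only [hQdef, dotProduct]
      exact Finset.sum_congr rfl fun k _ => mul_comm _ _
    have hv1 : v ⬝ᵥ (fun _ => (1 : ℝ)) = T := by
      simp only [dotProduct, mul_one, hT]
      exact Finset.sum_congr rfl fun k _ => hvk k
    rw [hvC, hv1] at h1
    linarith [h1]
  have hs1 : 0 < 1 - (a + b + c) := by linarith
  have step1 : (1 - (a + b + c)) * Q ≤ |T| := by
    have hGv := hG C
    have hHv := (abs_le.mp (hH C)).2
    have hGamv := (abs_le.mp (hGam C)).2
    have hHv' := (abs_le.mp (hH C)).1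
    have hGamv' := (abs_le.mp (hGam C)).1
    have hT1 : -T ≤ |T| := neg_le_abs T
    rw [← hv] at hGv hHv hGamv hHv' hGamv'
    rw [← hQdef] at hGv hHv hGamv hHv' hGamv'
    nlinarith [key]
  have cauchy : T ^ 2 ≤ S * Q := by
    have h2 : T ^ 2 ≤ (∑ k, Real.sqrt (d k) * (Real.sqrt (d k) * C k)) ^ 2 := by
      have : T = ∑ k, Real.sqrt (d k) * (Real.sqrt (d k) * C k) := by
        refine Finset.sum_congr rfl fun k _ => ?_
        rw [← mul_assoc, Real.mul_self_sqrt (hd k).le]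
      rw [this]
    calc T ^ 2 ≤ (∑ k, Real.sqrt (d k) * (Real.sqrt (d k) * C k)) ^ 2 := h2
      _ ≤ (∑ k, Real.sqrt (d k) ^ 2) * (∑ k, (Real.sqrt (d k) * C k) ^ 2) := by
          exact Finset.sum_mul_sq_le_sq_mul_sq Finset.univ _ _
      _ = S * Q := by
          rw [hS, hQeq]
          congr 1
          · exact Finset.sum_congr rfl fun k _ => Real.sq_sqrt (hd k).le
          · refine Finset.sum_congr rfl fun k _ => ?_
            rw [mul_pow, Real.sq_sqrt (hd k).le]
  have hQS : (1 - (a + b + c)) ^ 2 * Q ≤ S := by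
    rcases eq_or_lt_of_le hQ0 with h0 | h0
    · rw [← h0, mul_zero]
      rw [hS]
      exact Finset.sum_nonneg fun k _ => (hd k).le
    · have h3 : ((1 - (a + b + c)) * Q) ^ 2 ≤ |T| ^ 2 := by
        apply pow_le_pow_left₀ (by positivity) step1
      rw [sq_abs] at h3
      nlinarith
  have hmC : m * ∑ k, (C k) ^ 2 ≤ Q := by
    rw [hQeq, Finset.mul_sum]
    refine Finset.sum_le_sum fun k _ => ?_
    have : m ≤ d k := Finset.inf'_le _ (Finset.mem_univ k)
    nlinarith [sq_nonneg (C k)]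
  have hQfin : Q ≤ ((1 - (a + b + c))⁻¹) ^ 2 * S := by
    rw [inv_pow, inv_mul_eq_div, le_div_iff₀ (by positivity)]
    linarith [hQS]
  rw [div_eq_mul_inv]
  calc ∑ k, (C k) ^ 2 = (m * ∑ k, (C k) ^ 2) * m⁻¹ := by
        field_simp
    _ ≤ Q * m⁻¹ := by
        apply mul_le_mul_of_nonneg_right hmC (by positivity)
    _ ≤ ((1 - (a + b + c))⁻¹) ^ 2 * S * m⁻¹ := by
        apply mul_le_mul_of_nonneg_right hQfin (by positivity)
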